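/- arXiv:2604.25153 — 3 statements merged into one kernel-verified Lean document; each statement's English description precedes it below -/
import Mathlib

section
/- Let X be a nonempty set and let f, g : X → ℝ be bounded functions. Let (t_n) be a sequence of positive real numbers with t_n → 0, and let (g_n) be a sequence of bounded functions g_n : X → ℝ with sup_{x∈X}|g_n(x) − g(x)| → 0. Then (inf_{x∈X}(f(x) + t_n·g_n(x)) − inf_{x∈X} f(x)) / t_n converges to sup_{ε>0} inf_{x ∈ S_f^ε} g(x). That is, the infimum functional ι on bounded functions is Hadamard directionally differentiable at f with directional derivative ι'_f(g) = lim_{ε↓0} inf_{x ∈ S_f^ε} g(x) = sup_{ε>0} inf_{x ∈ S_f^ε} g(x). -/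
/-!
Write `m = ι(f)`, `D ε = inf_{S_f^ε} g` and `L = sup_{ε>0} D ε`. Replacing `g n` by `g`
moves `ι(f + t g n)` by at most `t · sup |g n - g|`, so it suffices to treat a fixed
direction `g`. Evaluating `f + s g` at a point of `S_f^{ηs}` where `g` is within `η` of
`D (ηs) ≤ L` gives `ι(f + s g) ≤ m + s (L + 2η)` for every `s > 0`. Conversely, if
`D ε > a`, then on `S_f^ε` we have `f + s g ≥ m + s a`, while off `S_f^ε` the excess `ε`
of `f` absorbs `s g` once `s` is small.
-/

open Filter Topology Set

section InfPerturbation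

variable {X : Type*} {u v : X → ℝ}

theorem BddBelow.range_add_mul (hu : BddBelow (range u)) (hv : BddBelow (range v)) {s : ℝ}
    (hs : 0 ≤ s) : BddBelow (range fun x => u x + s * v x) := by
  obtain ⟨a, ha⟩ := hu
  obtain ⟨b, hb⟩ := hv
  refine ⟨a + s * b, forall_mem_range.2 fun x => ?_⟩
  have hbx : s * b ≤ s * v x := mul_le_mul_of_nonneg_left (hb (mem_range_self x)) hs
  linarith [ha (mem_range_self x)]

theorem bddBelow_bddAbove_range_of_abs_le (h : ∃ C, ∀ x, |u x| ≤ C) :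
    BddBelow (range u) ∧ BddAbove (range u) := by
  obtain ⟨C, hC⟩ := h
  exact ⟨⟨-C, forall_mem_range.2 fun x => (abs_le.1 (hC x)).1⟩,
    ⟨C, forall_mem_range.2 fun x => (abs_le.1 (hC x)).2⟩⟩

theorem bddAbove_range_abs_sub (hu : ∃ C, ∀ x, |u x| ≤ C) (hv : ∃ C, ∀ x, |v x| ≤ C) :
    BddAbove (range fun x => |u x - v x|) := by
  obtain ⟨C, hC⟩ := hu
  obtain ⟨C', hC'⟩ := hv
  exact ⟨C + C', forall_mem_range.2 fun x =>
    (abs_sub _ _).trans (add_le_add (hC x) (hC' x))⟩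

variable [Nonempty X]

theorem ciInf_le_ciInf_add (hu : BddBelow (range u)) {c : ℝ} (h : ∀ x, u x ≤ v x + c) :
    ⨅ x, u x ≤ (⨅ x, v x) + c :=
  sub_le_iff_le_add.1 <| le_ciInf fun x => sub_le_iff_le_add.2 ((ciInf_le hu x).trans (h x))

theorem abs_ciInf_sub_ciInf_le (hu : BddBelow (range u)) (hv : BddBelow (range v)) {c : ℝ}
    (h : ∀ x, |u x - v x| ≤ c) : |(⨅ x, u x) - ⨅ x, v x| ≤ c := by
  rw [abs_sub_le_iff, sub_le_iff_le_add', sub_le_iff_le_add']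
  exact ⟨ciInf_le_ciInf_add hu fun x => by linarith [(abs_sub_le_iff.1 (h x)).1],
    ciInf_le_ciInf_add hv fun x => by linarith [(abs_sub_le_iff.1 (h x)).2]⟩

end InfPerturbation

section DirectionalDerivative

variable {X : Type*} {f g : X → ℝ}

/-- The `ε`-minimizer set `S_f^ε`. -/
def nearMinimizers (f : X → ℝ) (ε : ℝ) : Set X := {x | f x ≤ (⨅ y, f y) + ε}

/-- The directional derivative `ι'_f(g)`. -/
noncomputable def infDirDeriv (f g : X → ℝ) : ℝ :=
  ⨆ ε : Ioi (0 : ℝ), sInf (g '' nearMinimizers f ε)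

theorem sInf_image_nearMinimizers_le (hg : BddBelow (range g)) {ε : ℝ} {x : X}
    (hx : x ∈ nearMinimizers f ε) : sInf (g '' nearMinimizers f ε) ≤ g x :=
  csInf_le (hg.mono (image_subset_range _ _)) (mem_image_of_mem g hx)

variable [Nonempty X]

theorem nearMinimizers_nonempty (f : X → ℝ) {ε : ℝ} (hε : 0 < ε) :
    (nearMinimizers f ε).Nonempty := by
  obtain ⟨x, hx⟩ := exists_lt_of_ciInf_lt (lt_add_of_pos_right (⨅ y, f y) hε)
  exact ⟨x, hx.le⟩

theorem sInf_image_nearMinimizers_le_infDirDeriv (hg : BddBelow (range g))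
    (hg' : BddAbove (range g)) {ε : ℝ} (hε : 0 < ε) :
    sInf (g '' nearMinimizers f ε) ≤ infDirDeriv f g := by
  refine le_ciSup (f := fun ε : Ioi (0 : ℝ) => sInf (g '' nearMinimizers f ε)) ?_ ⟨ε, hε⟩
  obtain ⟨C, hC⟩ := hg'
  refine ⟨C, forall_mem_range.2 fun ε' => ?_⟩
  obtain ⟨x, hx⟩ := nearMinimizers_nonempty f ε'.2
  exact (sInf_image_nearMinimizers_le hg hx).trans (hC (mem_range_self x))

theorem iInf_add_mul_le_of_pos (hf : BddBelow (range f)) (hg : BddBelow (range g))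
    (hg' : BddAbove (range g)) {s η : ℝ} (hs : 0 < s) (hη : 0 < η) :
    ⨅ x, f x + s * g x ≤ (⨅ x, f x) + s * (infDirDeriv f g + 2 * η) := by
  have hηs : 0 < η * s := mul_pos hη hs
  obtain ⟨_, ⟨x, hxS, rfl⟩, hgx⟩ := exists_lt_of_csInf_lt
    ((nearMinimizers_nonempty f hηs).image g) (lt_add_of_pos_right _ hη)
  have hD := sInf_image_nearMinimizers_le_infDirDeriv (f := f) hg hg' hηs
  have hsg : s * g x ≤ s * (infDirDeriv f g + η) :=
    mul_le_mul_of_nonneg_left (by linarith) hs.le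
  calc ⨅ x, f x + s * g x ≤ f x + s * g x := ciInf_le (hf.range_add_mul hg hs.le) x
    _ ≤ (⨅ x, f x) + s * (infDirDeriv f g + 2 * η) := by
      have : f x ≤ (⨅ y, f y) + η * s := hxS
      linarith

theorem eventually_add_mul_le_iInf_add_mul (hf : BddBelow (range f))
    (hg : BddBelow (range g)) {a : ℝ} (ha : a < infDirDeriv f g) :
    ∀ᶠ s in 𝓝[>] 0, (⨅ x, f x) + s * a ≤ ⨅ x, f x + s * g x := by
  obtain ⟨⟨ε, hε⟩, hεa⟩ := exists_lt_of_lt_ciSup ha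
  obtain ⟨b, hb⟩ := hg
  have hsmall : ∀ᶠ s in 𝓝[>] (0 : ℝ), s * (a - b) < ε := by
    refine nhdsWithin_le_nhds (Tendsto.eventually_lt_const hε ?_)
    exact (continuous_mul_const (a - b)).tendsto' 0 0 (zero_mul _)
  filter_upwards [hsmall, self_mem_nhdsWithin] with s hs (hs0 : 0 < s)
  refine le_ciInf fun x => ?_
  have hbx : s * b ≤ s * g x := mul_le_mul_of_nonneg_left (hb (mem_range_self x)) hs0.le
  by_cases hx : x ∈ nearMinimizers f ε
  · have hgx : a < g x := hεa.trans_le (sInf_image_nearMinimizers_le ⟨b, hb⟩ hx)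
    have hax : s * a ≤ s * g x := mul_le_mul_of_nonneg_left hgx.le hs0.le
    linarith [ciInf_le hf x]
  · have : (⨅ y, f y) + ε < f x := not_le.1 hx
    linarith

theorem tendsto_iInf_add_mul_sub_div (hf : BddBelow (range f)) (hg : BddBelow (range g))
    (hg' : BddAbove (range g)) :
    Tendsto (fun s => ((⨅ x, f x + s * g x) - ⨅ x, f x) / s) (𝓝[>] 0)
      (𝓝 (infDirDeriv f g)) := by
  refine tendsto_order.2 ⟨fun a ha => ?_, fun a ha => ?_⟩
  · obtain ⟨a', haa', ha'⟩ := exists_between ha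
    filter_upwards [eventually_add_mul_le_iInf_add_mul hf hg ha', self_mem_nhdsWithin]
      with s hs (hs0 : 0 < s)
    exact haa'.trans_le ((le_div_iff₀ hs0).2 (by linarith))
  · filter_upwards [self_mem_nhdsWithin] with s (hs0 : 0 < s)
    have hη : 0 < (a - infDirDeriv f g) / 3 := by linarith
    have hle := iInf_add_mul_le_of_pos hf hg hg' hs0 hη
    calc ((⨅ x, f x + s * g x) - ⨅ x, f x) / s
        ≤ infDirDeriv f g + 2 * ((a - infDirDeriv f g) / 3) :=
          (div_le_iff₀' hs0).2 (by linarith)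
      _ < a := by linarith

end DirectionalDerivative

/-- Hadamard directional differentiability of the infimum functional on bounded
functions: for positive `t n → 0` and bounded `g n` with `sup_x |g n x - g x| → 0`,
the difference quotients of the infimum converge to
`sup_{ε>0} inf_{x ∈ S_f^ε} g(x)`. -/
theorem infimum_hadamard_directional_derivative {X : Type*} [Nonempty X]
    (f g : X → ℝ) (hf : ∃ C, ∀ x, |f x| ≤ C) (hg : ∃ C, ∀ x, |g x| ≤ C)
    (t : ℕ → ℝ) (ht : ∀ n, 0 < t n) (ht0 : Tendsto t atTop (𝓝 0))
    (gseq : ℕ → X → ℝ) (hgseq : ∀ n, ∃ C, ∀ x, |gseq n x| ≤ C)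
    (hconv : Tendsto (fun n => ⨆ x, |gseq n x - g x|) atTop (𝓝 0)) :
    Tendsto (fun n => ((⨅ x, (f x + t n * gseq n x)) - ⨅ x, f x) / t n) atTop
      (𝓝 (⨆ ε : Set.Ioi (0 : ℝ), sInf (g '' {x | f x ≤ (⨅ y, f y) + (ε : ℝ)}))) := by
  obtain ⟨hfb, -⟩ := bddBelow_bddAbove_range_of_abs_le hf
  obtain ⟨hgb, hga⟩ := bddBelow_bddAbove_range_of_abs_le hg
  have ht' : Tendsto t atTop (𝓝[>] 0) :=
    tendsto_nhdsWithin_iff.2 ⟨ht0, Eventually.of_forall ht⟩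
  refine ((tendsto_iInf_add_mul_sub_div hfb hgb hga).comp ht').congr_dist
    (squeeze_zero (fun _ => dist_nonneg) (fun n => ?_) hconv)
  have hperturb : ∀ x, |(f x + t n * g x) - (f x + t n * gseq n x)|
      ≤ t n * ⨆ x, |gseq n x - g x| := fun x => by
    rw [add_sub_add_left_eq_sub, ← mul_sub, abs_mul, abs_of_pos (ht n), abs_sub_comm]
    exact mul_le_mul_of_nonneg_left
      (le_ciSup (bddAbove_range_abs_sub (hgseq n) hg) x) (ht n).le
  rw [Function.comp_apply, Real.dist_eq, div_sub_div_same, sub_sub_sub_cancel_right, abs_div,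
    abs_of_pos (ht n), div_le_iff₀' (ht n)]
  exact abs_ciInf_sub_ciInf_le (hfb.range_add_mul hgb (ht n).le)
    (hfb.range_add_mul (bddBelow_bddAbove_range_of_abs_le (hgseq n)).1 (ht n).le) hperturb
end

section
/- Let (Ω, ℱ, P) be a probability space, d ≥ 1, X a nonempty subset of Euclidean space ℝ^d, and f : X → ℝ a bounded function with ψ* = inf_{x∈X} f(x). Assume S⁰ = {x ∈ X : f(x) = ψ*} is nonempty and f satisfies the sharp-growth inequality of order κ ≥ 1 with constant α > 0: f(x) − ψ* ≥ α·dist(x, S⁰)^κ for all x ∈ X. For each n let f̂_n(ω) : X → ℝ be bounded for every ω, with Δ_n(ω) = sup_{x∈X}|f̂_n(ω)(x) − f(x)| and ψ̂_n(ω) = inf_{x∈X} f̂_n(ω)(x). Let (r_n), (δ_n) be sequences of positive and nonnegative reals with limsup_n δ_n/r_n < ∞, let x̂_n : Ω → X, and let (A_N) be increasing measurable events with P(⋃_N A_N) = 1 such that f̂_n(ω)(x̂_n(ω)) ≤ ψ̂_n(ω) + δ_n for all ω ∈ A_N and n ≥ N. If for P-almost every ω, limsup_n Δ_n(ω)/r_n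 < ∞, then for P-almost every ω, limsup_{n→∞} dist(x̂_n(ω), S⁰)/r_n^{1/κ} < ∞. -/
/-!
On the event where `x̂_n` is a `δ_n`-minimizer of `f̂_n`, comparing `f` with `f̂_n` at `x̂_n` and
comparing the two infima gives the deterministic gap bound `f(x̂_n) - ψ* ≤ 2Δ_n + δ_n`.
Sharp growth turns it into `α dist(x̂_n, S⁰)^κ ≤ 2Δ_n + δ_n = O(r_n)` almost surely, and
taking `κ`-th roots gives the rate `r_n^{1/κ}`.
-/

open MeasureTheory Filter

lemma sub_iInf_le_of_abs_sub_le {ι : Type*} [Nonempty ι] {f g : ι → ℝ}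
    (hg : BddBelow (Set.range g)) {Δ δ : ℝ} (hfg : ∀ x, |g x - f x| ≤ Δ) {x : ι}
    (hx : g x ≤ (⨅ y, g y) + δ) :
    f x - ⨅ y, f y ≤ 2 * Δ + δ := by
  have hf_le : f x ≤ g x + Δ := by linarith [(abs_le.mp (hfg x)).1]
  have hinf : (⨅ y, g y) - Δ ≤ ⨅ y, f y :=
    le_ciInf fun y => by linarith [ciInf_le hg y, (abs_le.mp (hfg y)).2]
  linarith

lemma abs_sub_le_iSup_abs_sub {ι : Type*} {f g : ι → ℝ} (hf : ∃ C, ∀ x, |f x| ≤ C)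
    (hg : ∃ C, ∀ x, |g x| ≤ C) (x : ι) : |g x - f x| ≤ ⨆ y, |g y - f y| := by
  obtain ⟨C, hC⟩ := hf
  obtain ⟨D, hD⟩ := hg
  refine le_ciSup (f := fun y => |g y - f y|) ⟨D + C, ?_⟩ x
  rintro _ ⟨y, rfl⟩
  exact (abs_sub _ _).trans (add_le_add (hD y) (hC y))

lemma isBoundedUnder_div_rpow_of_mul_rpow_le {ι : Type*} {l : Filter ι} {u v r : ι → ℝ}
    {κ α : ℝ} (hu : ∀ i, 0 ≤ u i) (hr : ∀ i, 0 < r i) (hκ : 0 < κ) (hα : 0 < α)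
    (huv : ∀ᶠ i in l, α * u i ^ κ ≤ v i)
    (hv : IsBoundedUnder (· ≤ ·) l fun i => v i / r i) :
    IsBoundedUnder (· ≤ ·) l fun i => u i / r i ^ (1 / κ) := by
  obtain ⟨M, hM⟩ := hv
  rw [eventually_map] at hM
  set K := max (M / α) 0
  have hK : 0 ≤ K := le_max_right _ _
  refine ⟨K ^ (1 / κ), eventually_map.mpr ?_⟩
  filter_upwards [huv, hM] with i hi hMi
  have hpow : u i ^ κ ≤ K * r i := by
    rw [div_le_iff₀ (hr i)] at hMi
    calc u i ^ κ ≤ M / α * r i := by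
          rw [div_mul_eq_mul_div, le_div_iff₀ hα]; linarith
      _ ≤ K * r i := mul_le_mul_of_nonneg_right (le_max_left _ _) (hr i).le
  have hKr : 0 ≤ K * r i := mul_nonneg hK (hr i).le
  have hroot : u i ≤ (K * r i) ^ (1 / κ) := by
    rw [← Real.rpow_le_rpow_iff (hu i) (Real.rpow_nonneg hKr _) hκ, ← Real.rpow_mul hKr,
      one_div_mul_cancel hκ.ne', Real.rpow_one]
    exact hpow
  rwa [div_le_iff₀ (Real.rpow_pos_of_pos (hr i) _), ← Real.mul_rpow hK (hr i).le]

theorem as_distance_rate_transfer_general {Ω : Type*} [MeasurableSpace Ω]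
    (P : Measure Ω) [IsProbabilityMeasure P]
    {d : ℕ} (X : Set (EuclideanSpace ℝ (Fin d)))
    (f : X → ℝ) (hf : ∃ C, ∀ x, |f x| ≤ C)
    (κ α : ℝ) (hκ : 1 ≤ κ) (hα : 0 < α)
    (growth : ∀ x : X,
      α * Metric.infDist x {y : X | f y = ⨅ z, f z} ^ κ ≤ f x - ⨅ y, f y)
    (fhat : ℕ → Ω → X → ℝ) (hfhat : ∀ n ω, ∃ C, ∀ x, |fhat n ω x| ≤ C)
    (r : ℕ → ℝ) (hr : ∀ n, 0 < r n)
    (δ : ℕ → ℝ)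
    (hδr : IsBoundedUnder (· ≤ ·) atTop (fun n => δ n / r n))
    (xhat : ℕ → Ω → X) (A : ℕ → Set Ω)
    (hAmeas : ∀ N, MeasurableSet (A N))
    (hAfull : P (⋃ N, A N) = 1)
    (hmem : ∀ N, ∀ ω ∈ A N, ∀ n, N ≤ n →
      fhat n ω (xhat n ω) ≤ (⨅ x, fhat n ω x) + δ n)
    (hΔ : ∀ᵐ ω ∂P, IsBoundedUnder (· ≤ ·) atTop
      (fun n => (⨆ x, |fhat n ω x - f x|) / r n)) :
    ∀ᵐ ω ∂P, IsBoundedUnder (· ≤ ·) atTop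
      (fun n => Metric.infDist (xhat n ω) {y : X | f y = ⨅ z, f z} / r n ^ (1 / κ)) := by
  have hA : ∀ᵐ ω ∂P, ω ∈ ⋃ N, A N :=
    (mem_ae_iff_prob_eq_one (MeasurableSet.iUnion hAmeas)).mpr hAfull
  filter_upwards [hΔ, hA] with ω hΔω hω
  obtain ⟨N, hN⟩ := Set.mem_iUnion.mp hω
  have : Nonempty X := ⟨xhat 0 ω⟩
  set Δ := fun n => ⨆ x, |fhat n ω x - f x|
  refine isBoundedUnder_div_rpow_of_mul_rpow_le (v := fun n => 2 * Δ n + δ n)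
    (fun _ => Metric.infDist_nonneg) hr (by linarith) hα ?_ ?_
  · filter_upwards [eventually_ge_atTop N] with n hn
    obtain ⟨C, hC⟩ := hfhat n ω
    have hbdd : BddBelow (Set.range (fhat n ω)) :=
      ⟨-C, by rintro _ ⟨x, rfl⟩; exact neg_le_of_abs_le (hC x)⟩
    exact (growth _).trans <| sub_iInf_le_of_abs_sub_le hbdd
      (abs_sub_le_iSup_abs_sub hf (hfhat n ω)) (hmem N ω hN n hn)
  · refine (isBoundedUnder_le_add (isBoundedUnder_le_add hΔω hΔω) hδr).mono_le
      (.of_forall fun n => le_of_eq ?_)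
    simp only [Pi.add_apply]
    ring

/-- Outer almost-sure solution-set localization rate under sharp growth and the
empirical minimizer membership assumption: if almost surely `limsup Δ_n/r_n < ∞`,
then almost surely `limsup dist(x̂_n, S⁰)/r_n^{1/κ} < ∞`. -/
theorem as_distance_rate_transfer {Ω : Type*} [MeasurableSpace Ω]
    (P : Measure Ω) [IsProbabilityMeasure P]
    {d : ℕ} (hd : 1 ≤ d) (X : Set (EuclideanSpace ℝ (Fin d))) (hX : X.Nonempty)
    (f : X → ℝ) (hf : ∃ C, ∀ x, |f x| ≤ C)
    (κ α : ℝ) (hκ : 1 ≤ κ) (hα : 0 < α)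
    (hS : {x : X | f x = ⨅ y, f y}.Nonempty)
    (growth : ∀ x : X,
      α * Metric.infDist x {y : X | f y = ⨅ z, f z} ^ κ ≤ f x - ⨅ y, f y)
    (fhat : ℕ → Ω → X → ℝ) (hfhat : ∀ n ω, ∃ C, ∀ x, |fhat n ω x| ≤ C)
    (r : ℕ → ℝ) (hr : ∀ n, 0 < r n)
    (δ : ℕ → ℝ) (hδ : ∀ n, 0 ≤ δ n)
    (hδr : IsBoundedUnder (· ≤ ·) atTop (fun n => δ n / r n))
    (xhat : ℕ → Ω → X) (A : ℕ → Set Ω)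
    (hAmeas : ∀ N, MeasurableSet (A N)) (hAmono : Monotone A)
    (hAfull : P (⋃ N, A N) = 1)
    (hmem : ∀ N, ∀ ω ∈ A N, ∀ n, N ≤ n →
      fhat n ω (xhat n ω) ≤ (⨅ x, fhat n ω x) + δ n)
    (hΔ : ∀ᵐ ω ∂P, IsBoundedUnder (· ≤ ·) atTop
      (fun n => (⨆ x, |fhat n ω x - f x|) / r n)) :
    ∀ᵐ ω ∂P, IsBoundedUnder (· ≤ ·) atTop
      (fun n => Metric.infDist (xhat n ω) {y : X | f y = ⨅ z, f z} / r n ^ (1 / κ)) :=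
  as_distance_rate_transfer_general P X f hf κ α hκ hα growth fhat hfhat r hr δ hδr xhat A hAmeas
    hAfull hmem hΔ
end

section
/- Let (Ω, ℱ, P) be a probability space, d ≥ 1, X a nonempty subset of Euclidean space ℝ^d, and f : X → ℝ a bounded function with ψ* = inf_{x∈X} f(x) and B_f = sup_{x∈X} f(x) − ψ*. Assume S⁰ = {x ∈ X : f(x) = ψ*} is nonempty and f(x) − ψ* ≥ α·dist(x, S⁰)^κ for all x ∈ X, with α > 0 and κ ≥ 1. Let f̂(ω) : X → ℝ be bounded for every ω, with Δ(ω) = sup_{x∈X}|f̂(ω)(x) − f(x)| and ψ̂(ω) = inf_{x∈X} f̂(ω)(x). Let δ ≥ 0, x̂ : Ω → X, and A ∈ ℱ such that f̂(ω)(x̂(ω)) ≤ ψ̂(ω) + δ for every ω ∈ A. Assume ω ↦ dist(x̂(ω), S⁰) is measurable and ω ↦ Δ(ω) is measurable and integrable. Then ∫_Ω dist(x̂(ω), S⁰)^κ dP(ω) ≤ α⁻¹·(2∫_Ω Δ(ω) dP(ω) + δ + B_f·P(Aᶜ)). -/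
open MeasureTheory Set

/-! If `x̂` is a `δ`-minimizer of `f̂` and `x₀` minimizes `f`, then
`f x̂ - f x₀ ≤ (f̂ x̂ + Δ) - (f̂ x₀ - Δ) ≤ 2Δ + δ`, while off the event `A` the excess
`f x̂ - ψ*` is at most `B_f`. Sharp growth turns this into a pointwise bound on
`α · dist(x̂, S⁰)^κ`, and integrating the bound gives the theorem. -/

section ApproxMinimizer

variable {ι : Type*} {f g : ι → ℝ}

lemma bddAbove_range_of_abs_le (hf : ∃ C, ∀ x, |f x| ≤ C) : BddAbove (range f) := by
  obtain ⟨C, hC⟩ := hf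
  exact ⟨C, by rintro _ ⟨x, rfl⟩; exact (abs_le.1 (hC x)).2⟩

lemma bddBelow_range_of_abs_le (hf : ∃ C, ∀ x, |f x| ≤ C) : BddBelow (range f) := by
  obtain ⟨C, hC⟩ := hf
  exact ⟨-C, by rintro _ ⟨x, rfl⟩; exact (abs_le.1 (hC x)).1⟩

lemma bddAbove_range_abs_sub_of_abs_le (hf : ∃ C, ∀ x, |f x| ≤ C)
    (hg : ∃ C, ∀ x, |g x| ≤ C) : BddAbove (range fun x => |g x - f x|) := by
  obtain ⟨C, hC⟩ := hf
  obtain ⟨D, hD⟩ := hg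
  exact ⟨D + C, by rintro _ ⟨x, rfl⟩; exact (abs_sub _ _).trans (add_le_add (hD x) (hC x))⟩

lemma iSup_abs_sub_nonneg [Nonempty ι] (hfg : BddAbove (range fun x => |g x - f x|)) :
    0 ≤ ⨆ x, |g x - f x| :=
  (abs_nonneg _).trans (le_ciSup hfg (Classical.arbitrary ι))

lemma sub_iInf_le_of_le_iInf_add {x₀ x : ι} {δ : ℝ} (hx₀ : f x₀ = ⨅ y, f y)
    (hg : BddBelow (range g)) (hfg : BddAbove (range fun x => |g x - f x|))
    (hx : g x ≤ (⨅ y, g y) + δ) :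
    f x - ⨅ y, f y ≤ 2 * (⨆ y, |g y - f y|) + δ := by
  have hdev : ∀ y, |g y - f y| ≤ ⨆ y, |g y - f y| := le_ciSup hfg
  have hx_dev := (abs_le.1 (hdev x)).1
  have hx₀_dev := (abs_le.1 (hdev x₀)).2
  have hinf : (⨅ y, g y) ≤ g x₀ := ciInf_le hg x₀
  linarith

lemma sub_iInf_le_indicator_compl {Ω : Type*} [Nonempty ι] (hf : ∃ C, ∀ x, |f x| ≤ C)
    {fhat : Ω → ι → ℝ} (hfhat : ∀ ω, ∃ C, ∀ x, |fhat ω x| ≤ C) {x₀ : ι}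
    (hx₀ : f x₀ = ⨅ y, f y) {δ : ℝ} (hδ : 0 ≤ δ) {xhat : Ω → ι} {A : Set Ω}
    (hmem : ∀ ω ∈ A, fhat ω (xhat ω) ≤ (⨅ x, fhat ω x) + δ) (ω : Ω) :
    f (xhat ω) - ⨅ y, f y ≤ 2 * (⨆ x, |fhat ω x - f x|) + δ +
      Aᶜ.indicator (fun _ => (⨆ x, f x) - ⨅ x, f x) ω := by
  have hdev := bddAbove_range_abs_sub_of_abs_le hf (hfhat ω)
  by_cases hω : ω ∈ A
  · rw [indicator_of_notMem (notMem_compl_iff.2 hω), add_zero]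
    exact sub_iInf_le_of_le_iInf_add hx₀ (bddBelow_range_of_abs_le (hfhat ω)) hdev
      (hmem ω hω)
  · rw [indicator_of_mem (mem_compl hω)]
    have hsup : f (xhat ω) ≤ ⨆ x, f x := le_ciSup (bddAbove_range_of_abs_le hf) _
    have hΔ := iSup_abs_sub_nonneg hdev
    linarith

end ApproxMinimizer

lemma integral_two_mul_add_add_indicator_const {Ω : Type*} [MeasurableSpace Ω] (P : Measure Ω)
    [IsProbabilityMeasure P]
    {Δ : Ω → ℝ} (hΔ : Integrable Δ P) (δ B : ℝ) {A : Set Ω} (hA : MeasurableSet A) :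
    ∫ ω, 2 * Δ ω + δ + Aᶜ.indicator (fun _ => B) ω ∂P =
      2 * ∫ ω, Δ ω ∂P + δ + B * (P Aᶜ).toReal := by
  have hlin : Integrable (fun ω => 2 * Δ ω + δ) P := (hΔ.const_mul 2).add (integrable_const δ)
  rw [integral_add hlin ((integrable_const B).indicator hA.compl),
    integral_add (hΔ.const_mul 2) (integrable_const δ), integral_const_mul,
    integral_indicator_const B hA.compl, integral_const, probReal_univ, one_smul,
    smul_eq_mul, measureReal_def]
  ring

theorem mean_distance_transfer_general {Ω : Type*} [MeasurableSpace Ω]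
    (P : Measure Ω) [IsProbabilityMeasure P]
    {d : ℕ} (X : Set (EuclideanSpace ℝ (Fin d)))
    (f : X → ℝ) (hf : ∃ C, ∀ x, |f x| ≤ C)
    (κ α : ℝ) (hα : 0 < α)
    (hS : {x : X | f x = ⨅ y, f y}.Nonempty)
    (growth : ∀ x : X,
      α * Metric.infDist x {y : X | f y = ⨅ z, f z} ^ κ ≤ f x - ⨅ y, f y)
    (fhat : Ω → X → ℝ) (hfhat : ∀ ω, ∃ C, ∀ x, |fhat ω x| ≤ C)
    (δ : ℝ) (hδ : 0 ≤ δ) (xhat : Ω → X) (A : Set Ω) (hA : MeasurableSet A)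
    (hmem : ∀ ω ∈ A, fhat ω (xhat ω) ≤ (⨅ x, fhat ω x) + δ)
    (hΔint : Integrable (fun ω => ⨆ x, |fhat ω x - f x|) P) :
    ∫ ω, Metric.infDist (xhat ω) {y : X | f y = ⨅ z, f z} ^ κ ∂P ≤
      α⁻¹ * (2 * ∫ ω, (⨆ x, |fhat ω x - f x|) ∂P + δ +
        ((⨆ x, f x) - ⨅ x, f x) * (P Aᶜ).toReal) := by
  obtain ⟨x₀, hx₀⟩ := hS
  have : Nonempty X := ⟨x₀⟩
  have hpointwise : ∀ ω, α * Metric.infDist (xhat ω) {y : X | f y = ⨅ z, f z} ^ κ ≤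
      2 * (⨆ x, |fhat ω x - f x|) + δ +
        Aᶜ.indicator (fun _ => (⨆ x, f x) - ⨅ x, f x) ω :=
    fun ω => (growth (xhat ω)).trans (sub_iInf_le_indicator_compl hf hfhat hx₀ hδ hmem ω)
  rw [le_inv_mul_iff₀ hα, ← integral_const_mul,
    ← integral_two_mul_add_add_indicator_const P hΔint δ _ hA]
  refine integral_mono_of_nonneg (Filter.Eventually.of_forall fun ω => ?_) ?_
    (Filter.Eventually.of_forall hpointwise)
  · exact mul_nonneg hα.le (Real.rpow_nonneg Metric.infDist_nonneg κ)
  · exact ((hΔint.const_mul 2).add (integrable_const δ)).add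
      ((integrable_const _).indicator hA.compl)

/-- Outer-mean solution-set localization under sharp growth: if `x̂` is an
empirical `δ`-minimizer on the event `A` and `f` satisfies sharp growth of order
`κ ≥ 1` with constant `α > 0`, then
`∫ dist(x̂, S⁰)^κ ≤ α⁻¹ (2 ∫ Δ + δ + B_f · P(Aᶜ))`. -/
theorem mean_distance_transfer {Ω : Type*} [MeasurableSpace Ω]
    (P : Measure Ω) [IsProbabilityMeasure P]
    {d : ℕ} (hd : 1 ≤ d) (X : Set (EuclideanSpace ℝ (Fin d))) (hX : X.Nonempty)
    (f : X → ℝ) (hf : ∃ C, ∀ x, |f x| ≤ C)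
    (κ α : ℝ) (hκ : 1 ≤ κ) (hα : 0 < α)
    (hS : {x : X | f x = ⨅ y, f y}.Nonempty)
    (growth : ∀ x : X,
      α * Metric.infDist x {y : X | f y = ⨅ z, f z} ^ κ ≤ f x - ⨅ y, f y)
    (fhat : Ω → X → ℝ) (hfhat : ∀ ω, ∃ C, ∀ x, |fhat ω x| ≤ C)
    (δ : ℝ) (hδ : 0 ≤ δ) (xhat : Ω → X) (A : Set Ω) (hA : MeasurableSet A)
    (hmem : ∀ ω ∈ A, fhat ω (xhat ω) ≤ (⨅ x, fhat ω x) + δ)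
    (hdistmeas : Measurable fun ω =>
      Metric.infDist (xhat ω) {y : X | f y = ⨅ z, f z})
    (hΔmeas : Measurable fun ω => ⨆ x, |fhat ω x - f x|)
    (hΔint : Integrable (fun ω => ⨆ x, |fhat ω x - f x|) P) :
    ∫ ω, Metric.infDist (xhat ω) {y : X | f y = ⨅ z, f z} ^ κ ∂P ≤
      α⁻¹ * (2 * ∫ ω, (⨆ x, |fhat ω x - f x|) ∂P + δ +
        ((⨆ x, f x) - ⨅ x, f x) * (P Aᶜ).toReal) :=
  mean_distance_transfer_general P X f hf κ α hα hS growth fhat hfhat δ hδ xhat A hA hmem hΔint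
end
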